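/- Let α < ω₁^{ω₁} be a limit ordinal of cofinality ω. Then there are cofinally many α′ < α such that max(code(α′)) ≤ max(code(α)); that is, for every β < α there exists α′ with β < α′ < α and max(code(α′)) ≤ max(code(α)). -/

import Mathlib

open Ordinal

noncomputable section

/-- ω₁ as an ordinal. -/
def w1 : Ordinal := (Cardinal.aleph 1).ord

/-- 𝔠: finite partial functions from ω₁ to ω₁ \ {0}, represented as finitely supported
functions `Ordinal →₀ Ordinal` (the extension `s̄` by `0`) whose support consists of
ordinals below ω₁ and whose (nonzero) values are below ω₁. -/
def Cc := {f : Ordinal →₀ Ordinal // (∀ ξ ∈ f.support, ξ < w1) ∧ (∀ ξ ∈ f.support, f ξ < w1)}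

/-- The anti-lexicographic order on 𝔠 : `s < t` iff `s̄ ξ < t̄ ξ` at the greatest `ξ`
where `s̄` and `t̄` differ. -/
def Clt (s t : Cc) : Prop :=
  ∃ ξ : Ordinal, s.1 ξ < t.1 ξ ∧ ∀ η : Ordinal, ξ < η → s.1 η = t.1 η

/-- `max(s)`: the largest ordinal occurring in `dom(s) ∪ ran(s)` (0 if `s = ∅`). -/
def maxC (s : Cc) : Ordinal :=
  (s.1.support ∪ s.1.support.image fun ξ => s.1 ξ).sup id

/- ### Auxiliary lemmas -/

lemma w1_isLimit : Order.IsSuccLimit w1 := Cardinal.isSuccLimit_ord (Cardinal.aleph0_le_aleph 1)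

lemma w1_pos : 0 < w1 := w1_isLimit.pos

lemma succ_lt_w1 {x : Ordinal} (h : x < w1) : x + 1 < w1 := by
  rw [Ordinal.add_one_eq_succ]; exact w1_isLimit.succ_lt h

lemma val_lt_w1 (s : Cc) (η : Ordinal) : s.1 η < w1 := by
  by_cases h : η ∈ s.1.support
  · exact s.2.2 η h
  · rw [Finsupp.notMem_support_iff.mp h]; exact w1_pos

lemma le_maxC_of_mem {s : Cc} {η : Ordinal} (h : η ∈ s.1.support) : η ≤ maxC s :=
  Finset.le_sup (f := id) (Finset.mem_union_left _ h)

lemma val_le_maxC (s : Cc) (η : Ordinal) : s.1 η ≤ maxC s := by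
  by_cases h : η ∈ s.1.support
  · exact Finset.le_sup (f := id) (Finset.mem_union_right _ (Finset.mem_image_of_mem _ h))
  · rw [Finsupp.notMem_support_iff.mp h]; exact zero_le

lemma maxC_le {s : Cc} {M : Ordinal} (h1 : ∀ η ∈ s.1.support, η ≤ M)
    (h2 : ∀ η : Ordinal, s.1 η ≤ M) : maxC s ≤ M := by
  apply Finset.sup_le
  intro b hb
  rcases Finset.mem_union.mp hb with h | h
  · exact h1 b h
  · rcases Finset.mem_image.mp h with ⟨a, -, rfl⟩
    exact h2 a

lemma cc_ext {u v : Cc} (h : ∀ η, u.1 η = v.1 η) : u = v :=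
  Subtype.ext (Finsupp.ext h)

/-- Largest point of difference above a bound. -/
lemma exists_max_diff {u v : Cc} {ξ : Ordinal} (h : ∃ η, ξ < η ∧ u.1 η ≠ v.1 η) :
    ∃ η, ξ < η ∧ u.1 η ≠ v.1 η ∧ ∀ γ, η < γ → u.1 γ = v.1 γ := by
  classical
  set D := (u.1.support ∪ v.1.support).filter (fun η => ξ < η ∧ u.1 η ≠ v.1 η) with hD
  have hmem : ∀ η, ξ < η → u.1 η ≠ v.1 η → η ∈ D := by
    intro η h1 h2
    have : η ∈ u.1.support ∪ v.1.support := by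
      by_contra hc
      rcases Finset.notMem_union.mp hc with ⟨c1, c2⟩
      exact h2 (by rw [Finsupp.notMem_support_iff.mp c1, Finsupp.notMem_support_iff.mp c2])
    exact Finset.mem_filter.mpr ⟨this, h1, h2⟩
  obtain ⟨η0, h1, h2⟩ := h
  have hne : D.Nonempty := ⟨η0, hmem η0 h1 h2⟩
  set η := D.max' hne with hη
  have hηD := D.max'_mem hne
  rcases Finset.mem_filter.mp hηD with ⟨-, hlt, hne'⟩
  refine ⟨η, hlt, hne', fun γ hγ => ?_⟩
  by_contra hc
  exact absurd (D.le_max' γ (hmem γ (hlt.trans hγ) hc)) (not_le.mpr hγ)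

universe a b

section WO

variable [IsWellOrder Cc Clt]

lemma clt_iff {u v : Cc} : Clt u v ↔ Ordinal.typein Clt u < Ordinal.typein Clt v :=
  (Ordinal.typein_lt_typein Clt).symm

lemma not_both [IsWellOrder Cc.{a, b} Clt.{a, b}] {u v : Cc.{a, b}} (h1 : Clt u v) (h2 : Clt v u) : False := by
  rw [clt_iff] at h1 h2
  exact absurd (h1.trans h2) (lt_irrefl _)

lemma not_self [IsWellOrder Cc.{a, b} Clt.{a, b}] {u : Cc.{a, b}} (h : Clt u u) : False := not_both h h

lemma pack {α β : Ordinal} {s t u : Cc} (hs : Ordinal.typein Clt s = Ordinal.lift.{1,0} α)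
    (ht : Ordinal.typein Clt t = Ordinal.lift.{1,0} β)
    (h1 : Clt t u) (h2 : Clt u s) (hmax : maxC u ≤ maxC s) :
    ∃ α' : Ordinal, β < α' ∧ α' < α ∧
      ∃ s' : Cc, Ordinal.typein Clt s' = Ordinal.lift.{1,0} α' ∧ maxC s' ≤ maxC s := by
  have h1' := clt_iff.mp h1
  have h2' := clt_iff.mp h2
  rw [hs] at h2'
  rw [ht] at h1'
  obtain ⟨δ, hδα, hδ⟩ := Ordinal.lt_lift_iff.mp h2'
  refine ⟨δ, ?_, hδα, u, hδ.symm, hmax⟩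
  have : Ordinal.lift.{1,0} β < Ordinal.lift.{1,0} δ := by rw [hδ]; exact h1'
  exact Ordinal.lift_lt.mp this

end WO

/- ### Constructions -/

open Classical in
/-- Truncation of `s` above `ξ` with value `c` at `ξ`. -/
def mk1 (s : Cc) (ξ c : Ordinal) : Ordinal →₀ Ordinal :=
  (s.1.filter (fun η => ξ < η)) + Finsupp.single ξ c

lemma mk1_apply_gt {s : Cc} {ξ c η : Ordinal} (h : ξ < η) : mk1 s ξ c η = s.1 η := by
  classical
  simp [mk1, Finsupp.add_apply, Finsupp.filter_apply, Finsupp.single_apply, if_pos h,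
    if_neg h.ne]

lemma mk1_apply_self {s : Cc} {ξ c : Ordinal} : mk1 s ξ c ξ = c := by
  classical
  simp [mk1, Finsupp.add_apply, Finsupp.filter_apply, Finsupp.single_apply, if_neg (lt_irrefl ξ)]

lemma mk1_apply_lt {s : Cc} {ξ c η : Ordinal} (h : η < ξ) : mk1 s ξ c η = 0 := by
  classical
  simp [mk1, Finsupp.add_apply, Finsupp.filter_apply, Finsupp.single_apply,
    if_neg (asymm h : ¬ ξ < η), if_neg h.ne']

/-- `mk1` with an extra single value `d` at `ζ < ξ`. -/
def mk2 (s : Cc) (ξ c ζ d : Ordinal) : Ordinal →₀ Ordinal :=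
  mk1 s ξ c + Finsupp.single ζ d

lemma mk2_apply_gt {s : Cc} {ξ c ζ d η : Ordinal} (hζ : ζ < ξ) (h : ξ < η) :
    mk2 s ξ c ζ d η = s.1 η := by
  classical
  rw [mk2, Finsupp.add_apply, mk1_apply_gt h, Finsupp.single_apply,
    if_neg (hζ.trans h).ne, add_zero]

lemma mk2_apply_self {s : Cc} {ξ c ζ d : Ordinal} (hζ : ζ < ξ) : mk2 s ξ c ζ d ξ = c := by
  classical
  rw [mk2, Finsupp.add_apply, mk1_apply_self, Finsupp.single_apply, if_neg hζ.ne, add_zero]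

lemma mk2_apply_zeta {s : Cc} {ξ c ζ d : Ordinal} (hζ : ζ < ξ) : mk2 s ξ c ζ d ζ = d := by
  classical
  rw [mk2, Finsupp.add_apply, mk1_apply_lt hζ, Finsupp.single_apply, if_pos rfl, zero_add]

lemma mk2_apply_lt {s : Cc} {ξ c ζ d η : Ordinal} (h : η < ξ) (h2 : η ≠ ζ) :
    mk2 s ξ c ζ d η = 0 := by
  classical
  rw [mk2, Finsupp.add_apply, mk1_apply_lt h, Finsupp.single_apply, if_neg (Ne.symm h2), add_zero]

/-- Build an element of `Cc` from a finsupp which is pointwise small. -/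
def mkCc (f : Ordinal →₀ Ordinal) (h1 : ∀ η ∈ f.support, η < w1) (h2 : ∀ η, f η < w1) : Cc :=
  ⟨f, h1, fun η hη => h2 η⟩

lemma mk1_supp {s : Cc} {ξ c η : Ordinal} (h : η ∈ (mk1 s ξ c).support) :
    (ξ < η ∧ η ∈ s.1.support) ∨ η = ξ := by
  rcases lt_trichotomy η ξ with hc | hc | hc
  · exact absurd (mk1_apply_lt hc) (Finsupp.mem_support_iff.mp h)
  · exact Or.inr hc
  · refine Or.inl ⟨hc, Finsupp.mem_support_iff.mpr ?_⟩
    rw [← mk1_apply_gt hc]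
    exact Finsupp.mem_support_iff.mp h

lemma mk2_supp {s : Cc} {ξ c ζ d η : Ordinal} (hζ : ζ < ξ) (h : η ∈ (mk2 s ξ c ζ d).support) :
    (ξ < η ∧ η ∈ s.1.support) ∨ η = ξ ∨ η = ζ := by
  rcases lt_trichotomy η ξ with hc | hc | hc
  · by_cases h2 : η = ζ
    · exact Or.inr (Or.inr h2)
    · exact absurd (mk2_apply_lt hc h2) (Finsupp.mem_support_iff.mp h)
  · exact Or.inr (Or.inl hc)
  · refine Or.inl ⟨hc, Finsupp.mem_support_iff.mpr ?_⟩
    rw [← mk2_apply_gt hζ hc]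
    exact Finsupp.mem_support_iff.mp h
lemma one_lt_w1 : 1 < w1 := Ordinal.one_lt_of_isSuccLimit w1_isLimit

lemma mk1_val_lt {s : Cc} {ξ c : Ordinal} (hc : c < w1) : ∀ η, mk1 s ξ c η < w1 := by
  intro η
  rcases lt_trichotomy η ξ with h | h | h
  · rw [mk1_apply_lt h]; exact w1_pos
  · subst h; rw [mk1_apply_self]; exact hc
  · rw [mk1_apply_gt h]; exact val_lt_w1 s η

lemma mk2_val_lt {s : Cc} {ξ c ζ d : Ordinal} (hζ : ζ < ξ) (hc : c < w1) (hd : d < w1) :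
    ∀ η, mk2 s ξ c ζ d η < w1 := by
  intro η
  rcases lt_trichotomy η ξ with h | h | h
  · by_cases h2 : η = ζ
    · subst h2; rw [mk2_apply_zeta hζ]; exact hd
    · rw [mk2_apply_lt h h2]; exact w1_pos
  · subst h; rw [mk2_apply_self hζ]; exact hc
  · rw [mk2_apply_gt hζ h]; exact val_lt_w1 s η

/-- `mk1` as an element of `Cc` (with junk value `s` if the hypotheses fail). -/
def mk1C (s : Cc) (ξ c : Ordinal) : Cc :=
  if h : ξ < w1 ∧ c < w1 then
    ⟨mk1 s ξ c, fun η hη => by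
      rcases mk1_supp hη with ⟨-, hm⟩ | rfl
      · exact s.2.1 η hm
      · exact h.1,
     fun η _ => mk1_val_lt h.2 η⟩
  else s

lemma mk1C_val {s : Cc} {ξ c : Ordinal} (h1 : ξ < w1) (h2 : c < w1) :
    (mk1C s ξ c).1 = mk1 s ξ c := by
  rw [mk1C]; exact congrArg Subtype.val (dif_pos (⟨h1, h2⟩ : ξ < w1 ∧ c < w1))

/-- `mk2` as an element of `Cc` (with junk value `s` if the hypotheses fail). -/
def mk2C (s : Cc) (ξ c ζ d : Ordinal) : Cc :=
  if h : ζ < ξ ∧ ξ < w1 ∧ c < w1 ∧ d < w1 then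
    ⟨mk2 s ξ c ζ d, fun η hη => by
      rcases mk2_supp h.1 hη with ⟨-, hm⟩ | rfl | rfl
      · exact s.2.1 η hm
      · exact h.2.1
      · exact h.1.trans h.2.1,
     fun η _ => mk2_val_lt h.1 h.2.2.1 h.2.2.2 η⟩
  else s

lemma mk2C_val {s : Cc} {ξ c ζ d : Ordinal} (h0 : ζ < ξ) (h1 : ξ < w1) (h2 : c < w1)
    (h3 : d < w1) : (mk2C s ξ c ζ d).1 = mk2 s ξ c ζ d := by
  rw [mk2C]; exact congrArg Subtype.val (dif_pos (⟨h0, h1, h2, h3⟩ : ζ < ξ ∧ ξ < w1 ∧ c < w1 ∧ d < w1))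

lemma maxC_mk1C_le {s : Cc} {ξ c : Ordinal} (h1 : ξ < w1) (h2 : c < w1)
    (hξ : ξ ≤ maxC s) (hc : c ≤ maxC s) : maxC (mk1C s ξ c) ≤ maxC s := by
  apply maxC_le
  · intro η hη
    rw [mk1C_val h1 h2] at hη
    rcases mk1_supp hη with ⟨-, hm⟩ | rfl
    · exact le_maxC_of_mem hm
    · exact hξ
  · intro η
    rw [mk1C_val h1 h2]
    rcases lt_trichotomy η ξ with h | h | h
    · rw [mk1_apply_lt h]; exact zero_le
    · subst h; rw [mk1_apply_self]; exact hc
    · rw [mk1_apply_gt h]; exact val_le_maxC s η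

lemma maxC_mk2C_le {s : Cc} {ξ c ζ d : Ordinal} (h0 : ζ < ξ) (h1 : ξ < w1) (h2 : c < w1)
    (h3 : d < w1) (hξ : ξ ≤ maxC s) (hc : c ≤ maxC s) (hd : d ≤ maxC s) :
    maxC (mk2C s ξ c ζ d) ≤ maxC s := by
  apply maxC_le
  · intro η hη
    rw [mk2C_val h0 h1 h2 h3] at hη
    rcases mk2_supp h0 hη with ⟨-, hm⟩ | rfl | rfl
    · exact le_maxC_of_mem hm
    · exact hξ
    · exact (h0.trans_le hξ).le
  · intro η
    rw [mk2C_val h0 h1 h2 h3]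
    rcases lt_trichotomy η ξ with h | h | h
    · by_cases h4 : η = ζ
      · subst h4; rw [mk2_apply_zeta h0]; exact hd
      · rw [mk2_apply_lt h h4]; exact zero_le
    · subst h; rw [mk2_apply_self h0]; exact hc
    · rw [mk2_apply_gt h0 h]; exact val_le_maxC s η
/-- If α < ω₁ ^ ω₁ is a limit ordinal of cofinality ω, then there are cofinally many
α' < α whose code has max at most the max of the code of α. -/
theorem stmt_9 [IsWellOrder Cc Clt] (α : Ordinal) (hα : α < w1 ^ w1)
    (hlim : Order.IsSuccLimit α) (hcof : α.cof = Cardinal.aleph0)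
    (s : Cc) (hs : Ordinal.typein Clt s = Ordinal.lift.{1, 0} α) :
    ∀ β : Ordinal, β < α → ∃ α' : Ordinal, β < α' ∧ α' < α ∧
      ∃ s' : Cc, Ordinal.typein Clt s' = Ordinal.lift.{1, 0} α' ∧ maxC s' ≤ maxC s := by
  intro β hβ
  have hsty : Ordinal.lift.{1,0} α < Ordinal.type Clt := by
    rw [← hs]; exact Ordinal.typein_lt_type Clt s
  have hβty : Ordinal.lift.{1,0} β < Ordinal.type Clt :=
    (Ordinal.lift_lt.mpr hβ).trans hsty
  obtain ⟨t, ht⟩ := Ordinal.typein_surj Clt hβty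
  have hts : Clt t s := clt_iff.mpr (by rw [hs, ht]; exact Ordinal.lift_lt.mpr hβ)
  obtain ⟨ξ, hξlt, hξeq⟩ := hts
  have hξs : ξ ∈ s.1.support :=
    Finsupp.mem_support_iff.mpr
      (pos_iff_ne_zero.mp ((zero_le).trans_lt hξlt))
  have hξw : ξ < w1 := s.2.1 ξ hξs
  have hξM : ξ ≤ maxC s := le_maxC_of_mem hξs
  have htξw : t.1 ξ + 1 < w1 := succ_lt_w1 (val_lt_w1 t ξ)
  have hsucc_le : t.1 ξ + 1 ≤ s.1 ξ := by
    rw [Ordinal.add_one_eq_succ]; exact Order.succ_le_of_lt hξlt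
  -- the element `t` is less than `mk1C s ξ (t ξ + 1)` in all the C1-cases
  have htu : Clt t (mk1C s ξ (t.1 ξ + 1)) := by
    refine ⟨ξ, ?_, fun η hη => ?_⟩
    · rw [mk1C_val hξw htξw, mk1_apply_self, Ordinal.add_one_eq_succ]
      exact Order.lt_succ _
    · rw [mk1C_val hξw htξw, mk1_apply_gt hη]; exact hξeq η hη
  have humax : maxC (mk1C s ξ (t.1 ξ + 1)) ≤ maxC s :=
    maxC_mk1C_le hξw htξw hξM (hsucc_le.trans (val_le_maxC s ξ))
  by_cases hsucc : s.1 ξ = t.1 ξ + 1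
  · by_cases hzero : ∀ η, η < ξ → s.1 η = 0
    · -- Case C2 : the truncation equals s itself; analyse ξ
      rcases Ordinal.zero_or_succ_or_isSuccLimit ξ with hξ0 | ⟨ζ, hζ⟩ | hξlim
      · -- ξ = 0 : s would be a successor of t, contradicting that α is a limit
        subst hξ0
        exfalso
        have hbet : ∀ u : Cc, Clt t u → Clt u s → False := by
          intro u h1 h2
          have hab : ∀ γ, (0:Ordinal) < γ → u.1 γ = s.1 γ := by
            by_contra hc
            push_neg at hc
            obtain ⟨η, hη0, hηne, hηab⟩ := exists_max_diff hc
            rcases lt_or_gt_of_ne hηne with hlt | hgt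
            · refine not_both ⟨η, ?_, fun γ hγ => ?_⟩ h1
              · rw [← hξeq η hη0] at hlt; exact hlt
              · rw [hηab γ hγ, ← hξeq γ (hη0.trans hγ)]
            · exact not_both h2 ⟨η, hgt, fun γ hγ => (hηab γ hγ).symm⟩
          rcases lt_trichotomy (u.1 0) (t.1 0) with h0 | h0 | h0
          · exact not_both ⟨0, h0, fun γ hγ => by rw [hab γ hγ, ← hξeq γ hγ]⟩ h1
          · have : u = t := cc_ext fun η => by
              rcases eq_or_ne η 0 with rfl | hne
              · exact h0
              · rw [hab η (pos_iff_ne_zero.mpr hne), ← hξeq η (pos_iff_ne_zero.mpr hne)]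
            exact not_self (this ▸ h1)
          · have hle : s.1 0 ≤ u.1 0 := by
              rw [hsucc, Ordinal.add_one_eq_succ]; exact Order.succ_le_of_lt h0
            rcases hle.lt_or_eq with hlt | heq
            · exact not_both h2 ⟨0, hlt, fun γ hγ => (hab γ hγ).symm⟩
            · have : u = s := cc_ext fun η => by
                rcases eq_or_ne η 0 with rfl | hne
                · exact heq.symm
                · exact hab η (pos_iff_ne_zero.mpr hne)
              exact not_self (this ▸ h2)
        have h1 : Ordinal.typein Clt t < Ordinal.lift.{1,0} α := by
          rw [ht]; exact Ordinal.lift_lt.mpr hβ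
        have h2 : Order.succ (Ordinal.typein Clt t) < Ordinal.lift.{1,0} α :=
          (Ordinal.isSuccLimit_lift.mpr hlim).succ_lt h1
        obtain ⟨u, hu⟩ := Ordinal.typein_surj Clt (h2.trans hsty)
        refine hbet u (clt_iff.mpr ?_) (clt_iff.mpr ?_)
        · rw [hu]; exact Order.lt_succ _
        · rw [hu, hs]; exact h2
      · -- ξ = ζ + 1 : contradiction with cofinality ω
        exfalso
        have hζξ : ζ < ξ := by rw [← hζ]; exact Order.lt_succ ζ
        have hζw : ζ < w1 := hζξ.trans hξw
        have htξw' : t.1 ξ < w1 := val_lt_w1 t ξ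
        set uu : Ordinal → Cc := fun ν => mk2C s ξ (t.1 ξ) ζ ν with huu
        have huval : ∀ ν, ν < w1 → (uu ν).1 = mk2 s ξ (t.1 ξ) ζ ν := fun ν hν =>
          mk2C_val hζξ hξw htξw' hν
        have hge : ∀ γ, ζ < γ → γ = ξ ∨ ξ < γ := by
          intro γ hγ
          have : ξ ≤ γ := by rw [← hζ]; exact Order.succ_le_of_lt hγ
          exact this.eq_or_lt.imp Eq.symm id
        have hmono : ∀ ν ν', ν < ν' → ν' < w1 → Clt (uu ν) (uu ν') := by
          intro ν ν' h hν'
          have hν : ν < w1 := h.trans hν'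
          refine ⟨ζ, ?_, fun γ hγ => ?_⟩
          · rw [huval ν hν, huval ν' hν', mk2_apply_zeta hζξ, mk2_apply_zeta hζξ]; exact h
          · rw [huval ν hν, huval ν' hν']
            rcases hge γ hγ with rfl | hgt
            · rw [mk2_apply_self hζξ, mk2_apply_self hζξ]
            · rw [mk2_apply_gt hζξ hgt, mk2_apply_gt hζξ hgt]
        have hus : ∀ ν, ν < w1 → Clt (uu ν) s := by
          intro ν hν
          refine ⟨ξ, ?_, fun γ hγ => ?_⟩
          · rw [huval ν hν, mk2_apply_self hζξ]; exact hξlt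
          · rw [huval ν hν, mk2_apply_gt hζξ hγ]
        have hcofinal : ∀ v : Cc, Clt v s → ∃ ν, ν < w1 ∧ Clt v (uu ν) := by
          intro v hvs
          by_cases hab : ∀ γ, ξ < γ → v.1 γ = s.1 γ
          · have hvξ : v.1 ξ < s.1 ξ := by
              rcases lt_trichotomy (v.1 ξ) (s.1 ξ) with h | h | h
              · exact h
              · exfalso
                obtain ⟨χ, hχlt, hχab⟩ := hvs
                rcases lt_trichotomy χ ξ with hc | hc | hc
                · rw [hzero χ hc] at hχlt; exact not_lt_of_ge zero_le hχlt
                · subst hc; rw [h] at hχlt; exact lt_irrefl _ hχlt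
                · rw [hab χ hc] at hχlt; exact lt_irrefl _ hχlt
              · exact (not_both hvs ⟨ξ, h, fun γ hγ => (hab γ hγ).symm⟩).elim
            have hvξ' : v.1 ξ ≤ t.1 ξ := by
              rw [hsucc, Ordinal.add_one_eq_succ, Order.lt_succ_iff] at hvξ; exact hvξ
            rcases hvξ'.lt_or_eq with hlt | heq
            · refine ⟨1, one_lt_w1, ξ, ?_, fun γ hγ => ?_⟩
              · rw [huval 1 one_lt_w1, mk2_apply_self hζξ]; exact hlt
              · rw [huval 1 one_lt_w1, mk2_apply_gt hζξ hγ]; exact hab γ hγ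
            · have hν : v.1 ζ + 1 < w1 := succ_lt_w1 (val_lt_w1 v ζ)
              refine ⟨v.1 ζ + 1, hν, ζ, ?_, fun γ hγ => ?_⟩
              · rw [huval _ hν, mk2_apply_zeta hζξ, Ordinal.add_one_eq_succ]
                exact Order.lt_succ _
              · rw [huval _ hν]
                rcases hge γ hγ with rfl | hgt
                · rw [mk2_apply_self hζξ]; exact heq
                · rw [mk2_apply_gt hζξ hgt]; exact hab γ hgt
          · push_neg at hab
            obtain ⟨η, hηξ, hηne, hηab⟩ := exists_max_diff hab
            have hηlt : v.1 η < s.1 η := by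
              rcases lt_or_gt_of_ne hηne with h | h
              · exact h
              · exact (not_both hvs ⟨η, h, fun γ hγ => (hηab γ hγ).symm⟩).elim
            refine ⟨1, one_lt_w1, η, ?_, fun γ hγ => ?_⟩
            · rw [huval 1 one_lt_w1, mk2_apply_gt hζξ hηξ]; exact hηlt
            · rw [huval 1 one_lt_w1, mk2_apply_gt hζξ (hηξ.trans hγ)]; exact hηab γ hγ
        -- now derive the contradiction with cofinality ω
        obtain ⟨ι, f, hlsub, hcard⟩ := Ordinal.exists_lsub_cof α
        have hchoice : ∀ i : ι, ∃ ν, ν < w1 ∧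
            Ordinal.lift.{1,0} (f i) < Ordinal.typein Clt (uu ν) := by
          intro i
          have hfi : f i < α := by rw [← hlsub]; exact Ordinal.lt_lsub f i
          have hfity : Ordinal.lift.{1,0} (f i) < Ordinal.type Clt :=
            (Ordinal.lift_lt.mpr hfi).trans hsty
          obtain ⟨v, hv⟩ := Ordinal.typein_surj Clt hfity
          have hvs : Clt v s := clt_iff.mpr (by rw [hv, hs]; exact Ordinal.lift_lt.mpr hfi)
          obtain ⟨ν, hν, hc⟩ := hcofinal v hvs
          exact ⟨ν, hν, by rw [← hv]; exact clt_iff.mp hc⟩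
        choose ν hν1 hν2 using hchoice
        have hcard' : (Cardinal.mk ι) < w1.cof := by
          rw [show w1.cof = Cardinal.aleph 1 from Cardinal.isRegular_aleph_one.cof_eq,
            hcard, hcof]
          exact Cardinal.aleph0_lt_aleph_one
        have hsup : Ordinal.lsub ν < w1 := Ordinal.lsub_lt_ord hcard' hν1
        have husν : Clt (uu (Ordinal.lsub ν)) s := hus _ hsup
        have hlt : Ordinal.typein Clt (uu (Ordinal.lsub ν)) < Ordinal.lift.{1,0} α := by
          rw [← hs]; exact clt_iff.mp husν
        obtain ⟨δ, hδα, hδ⟩ := Ordinal.lt_lift_iff.mp hlt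
        have hall : ∀ i, f i < δ := by
          intro i
          have h1 := hν2 i
          have h2 : Ordinal.typein Clt (uu (ν i)) < Ordinal.typein Clt (uu (Ordinal.lsub ν)) :=
            clt_iff.mp (hmono _ _ (Ordinal.lt_lsub ν i) hsup)
          have := h1.trans h2
          rw [← hδ] at this
          exact Ordinal.lift_lt.mp this
        have : α ≤ δ := by rw [← hlsub]; exact Ordinal.lsub_le hall
        exact absurd this (not_le.mpr hδα)
      · -- ξ a limit ordinal
        have hζ' : ((t.1.support.filter (· < ξ)).sup id) < ξ := by
          refine (Finset.sup_lt_iff ?_).mpr ?_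
          · exact hξlim.pos
          · intro b hb
            exact (Finset.mem_filter.mp hb).2
        set ζ := (t.1.support.filter (· < ξ)).sup id + 1 with hζdef
        have hζξ : ζ < ξ := by
          rw [hζdef, Ordinal.add_one_eq_succ]; exact hξlim.succ_lt hζ'
        have hζw : ζ < w1 := hζξ.trans hξw
        have htζ0 : ∀ γ, ζ ≤ γ → γ < ξ → t.1 γ = 0 := by
          intro γ h1 h2
          rw [Finsupp.notMem_support_iff.mp ?_]
          intro hmem
          have : γ ≤ (t.1.support.filter (· < ξ)).sup id :=
            Finset.le_sup (f := id) (Finset.mem_filter.mpr ⟨hmem, h2⟩)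
          have : γ < ζ := by
            rw [hζdef, Ordinal.add_one_eq_succ]; exact Order.lt_succ_of_le this
          exact absurd h1 (not_le.mpr this)
        have htξw' : t.1 ξ < w1 := val_lt_w1 t ξ
        have hval : (mk2C s ξ (t.1 ξ) ζ 1).1 = mk2 s ξ (t.1 ξ) ζ 1 :=
          mk2C_val hζξ hξw htξw' one_lt_w1
        have h1 : Clt t (mk2C s ξ (t.1 ξ) ζ 1) := by
          refine ⟨ζ, ?_, fun γ hγ => ?_⟩
          · rw [hval, mk2_apply_zeta hζξ, htζ0 ζ le_rfl hζξ]; exact zero_lt_one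
          · rw [hval]
            rcases lt_trichotomy γ ξ with hc | hc | hc
            · rw [mk2_apply_lt hc (ne_of_gt hγ), htζ0 γ hγ.le hc]
            · subst hc; rw [mk2_apply_self hζξ]
            · rw [mk2_apply_gt hζξ hc]; exact hξeq γ hc
        have h2 : Clt (mk2C s ξ (t.1 ξ) ζ 1) s := by
          refine ⟨ξ, ?_, fun γ hγ => ?_⟩
          · rw [hval, mk2_apply_self hζξ]; exact hξlt
          · rw [hval, mk2_apply_gt hζξ hγ]
        have hmax : maxC (mk2C s ξ (t.1 ξ) ζ 1) ≤ maxC s :=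
          maxC_mk2C_le hζξ hξw htξw' one_lt_w1 hξM
            ((hξlt.le).trans (val_le_maxC s ξ))
            ((Order.one_le_iff_pos.mpr hξlim.pos).trans hξM)
        exact pack hs ht h1 h2 hmax
    · -- Case C1b : some nonzero value of s below ξ
      push_neg at hzero
      obtain ⟨η0, hη0ξ, hη0ne⟩ := hzero
      have hη0mem : η0 ∈ s.1.support.filter (· < ξ) :=
        Finset.mem_filter.mpr ⟨Finsupp.mem_support_iff.mpr hη0ne, hη0ξ⟩
      set F := s.1.support.filter (· < ξ) with hF
      have hFne : F.Nonempty := ⟨η0, hη0mem⟩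
      set η := F.max' hFne with hηdef
      have hηF := F.max'_mem hFne
      rcases Finset.mem_filter.mp hηF with ⟨hηs, hηξ⟩
      have h2 : Clt (mk1C s ξ (t.1 ξ + 1)) s := by
        refine ⟨η, ?_, fun γ hγ => ?_⟩
        · rw [mk1C_val hξw htξw, mk1_apply_lt hηξ]
          exact pos_iff_ne_zero.mpr (Finsupp.mem_support_iff.mp hηs)
        · rw [mk1C_val hξw htξw]
          rcases lt_trichotomy γ ξ with hc | hc | hc
          · rw [mk1_apply_lt hc, Finsupp.notMem_support_iff.mp ?_]
            intro hmem
            exact absurd (F.le_max' γ (Finset.mem_filter.mpr ⟨hmem, hc⟩)) (not_le.mpr hγ)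
          · subst hc; rw [mk1_apply_self, hsucc]
          · rw [mk1_apply_gt hc]
      exact pack hs ht htu h2 humax
  · -- Case C1a : t ξ + 1 < s ξ
    have hlt' : t.1 ξ + 1 < s.1 ξ := lt_of_le_of_ne hsucc_le (Ne.symm hsucc)
    have h2 : Clt (mk1C s ξ (t.1 ξ + 1)) s := by
      refine ⟨ξ, ?_, fun γ hγ => ?_⟩
      · rw [mk1C_val hξw htξw, mk1_apply_self]; exact hlt'
      · rw [mk1C_val hξw htξw, mk1_apply_gt hγ]
    exact pack hs ht htu h2 humax
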